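/- For any w in the constraint set with some |w_j - z_j| > 0 and g(w) < L, there exists δ > 0 such that replacing w_j by w_j + δ(z_j - w_j) yields a point w' with g(w') ≤ L and f(w') < f(w). Hence no point with g(w) < L and f(w) > 0 is a minimizer of f subject to g ≤ L. -/

import Mathlib

/-!
Moving the `j`-th point a fraction `δ ∈ (0, 1)` of the way towards its target `z j` shrinks
`‖w j - z j‖` by the factor `1 - δ`, so the energy strictly drops because `t ↦ t ^ p` is strictly
increasing. Since the path length is continuous and `pathLen w < L` holds strictly, small enough
such moves keep the constraint `pathLen ≤ L`.
-/

noncomputable def pathLen (J : ℕ) (p0 pend : EuclideanSpace ℝ (Fin 2))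
    (w : Fin J → EuclideanSpace ℝ (Fin 2)) : ℝ :=
  ∑ j : Fin (J + 1),
    ‖(Fin.cons p0 (Fin.snoc w pend) : Fin (J + 2) → EuclideanSpace ℝ (Fin 2)) j.castSucc -
      (Fin.cons p0 (Fin.snoc w pend) : Fin (J + 2) → EuclideanSpace ℝ (Fin 2)) j.succ‖

noncomputable def totalEnergy (J : ℕ) (p : ℝ) (z : Fin J → EuclideanSpace ℝ (Fin 2))
    (w : Fin J → EuclideanSpace ℝ (Fin 2)) : ℝ :=
  ∑ j, ‖w j - z j‖ ^ p

open Filter Topology Function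

theorem continuous_pathLen (J : ℕ) (p0 pend : EuclideanSpace ℝ (Fin 2)) :
    Continuous (pathLen J p0 pend) := by
  have hpts : Continuous fun w : Fin J → EuclideanSpace ℝ (Fin 2) =>
      (Fin.cons p0 (Fin.snoc w pend) : Fin (J + 2) → EuclideanSpace ℝ (Fin 2)) :=
    continuous_const.finCons (continuous_id.finSnoc (A := fun _ => EuclideanSpace ℝ (Fin 2))
      continuous_const)
  exact continuous_finsetSum _ fun k _ =>
    ((continuous_apply k.castSucc).comp hpts |>.sub ((continuous_apply k.succ).comp hpts)).norm

theorem norm_add_smul_sub_sub {E : Type*} [SeminormedAddCommGroup E] [NormedSpace ℝ E]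
    (x z : E) (δ : ℝ) : ‖x + δ • (z - x) - z‖ = |1 - δ| * ‖x - z‖ := by
  rw [show x + δ • (z - x) - z = (1 - δ) • (x - z) by module, norm_smul, Real.norm_eq_abs]

theorem norm_add_smul_sub_sub_lt {E : Type*} [SeminormedAddCommGroup E] [NormedSpace ℝ E]
    {x z : E} (hxz : 0 < ‖x - z‖) {δ : ℝ} (hδ₀ : 0 < δ) (hδ₂ : δ < 2) :
    ‖x + δ • (z - x) - z‖ < ‖x - z‖ := by
  rw [norm_add_smul_sub_sub]
  exact mul_lt_of_lt_one_left hxz (abs_sub_lt_iff.2 ⟨by linarith, by linarith⟩)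

theorem totalEnergy_update_lt {J : ℕ} {p : ℝ} (hp : 0 < p) (z w : Fin J → EuclideanSpace ℝ (Fin 2))
    {j : Fin J} {v : EuclideanSpace ℝ (Fin 2)} (hv : ‖v - z j‖ < ‖w j - z j‖) :
    totalEnergy J p z (update w j v) < totalEnergy J p z w := by
  have hterms : (fun i => ‖update w j v i - z i‖ ^ p) =
      update (fun i => ‖w i - z i‖ ^ p) j (‖v - z j‖ ^ p) :=
    funext (apply_update (fun i x => ‖x - z i‖ ^ p) w j v)
  unfold totalEnergy
  rw [hterms]
  exact Fintype.sum_strictMono <| update_lt_self_iff.2 <|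
    Real.rpow_lt_rpow (norm_nonneg _) hv hp

theorem exists_mem_Ioo_lt_of_continuousAt {f : ℝ → ℝ} (hf : ContinuousAt f 0) {L : ℝ}
    (h0 : f 0 < L) {b : ℝ} (hb : 0 < b) : ∃ δ ∈ Set.Ioo 0 b, f δ < L := by
  have hlt : ∀ᶠ δ in 𝓝[>] 0, f δ < L :=
    nhdsWithin_le_nhds (hf.eventually (gt_mem_nhds h0))
  have hIoo : ∀ᶠ δ in 𝓝[>] 0, δ ∈ Set.Ioo 0 b := Ioo_mem_nhdsGT hb
  exact (hIoo.and hlt).exists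

theorem stmt_6 (J : ℕ) (p : ℝ) (hp : 0 < p)
    (p0 pend : EuclideanSpace ℝ (Fin 2)) (z : Fin J → EuclideanSpace ℝ (Fin 2))
    (L : ℝ) (w : Fin J → EuclideanSpace ℝ (Fin 2))
    (hg : pathLen J p0 pend w < L) (j : Fin J) (hj : ‖w j - z j‖ > 0) :
    (∃ δ : ℝ, 0 < δ ∧
      pathLen J p0 pend (Function.update w j (w j + δ • (z j - w j))) ≤ L ∧
      totalEnergy J p z (Function.update w j (w j + δ • (z j - w j))) < totalEnergy J p z w) ∧
    ¬ (∀ w', pathLen J p0 pend w' ≤ L → totalEnergy J p z w ≤ totalEnergy J p z w') := by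
  set move : ℝ → Fin J → EuclideanSpace ℝ (Fin 2) := fun δ => update w j (w j + δ • (z j - w j))
  have hmove : Continuous move :=
    continuous_const.update j (continuous_const.add (continuous_id.smul continuous_const))
  have hmove0 : pathLen J p0 pend (move 0) < L := by simpa [move] using hg
  obtain ⟨δ, ⟨hδ₀, hδ₁⟩, hpath⟩ := exists_mem_Ioo_lt_of_continuousAt
    ((continuous_pathLen J p0 pend).comp hmove).continuousAt hmove0 one_pos
  have henergy : totalEnergy J p z (move δ) < totalEnergy J p z w :=
    totalEnergy_update_lt hp z w (norm_add_smul_sub_sub_lt hj hδ₀ (by linarith))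
  exact ⟨⟨δ, hδ₀, hpath.le, henergy⟩, fun hmin => (hmin _ hpath.le).not_gt henergy⟩
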